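/- (Robinson's test, second equivalence) A first-order theory T is model complete if and only if every L-formula φ(x₁,…,xₙ) is equivalent modulo T to a universal formula, i.e., there is a formula ψ(x₁,…,xₙ) of the form ∀ȳ χ with χ quantifier-free such that T ⊨ ∀x₁…∀xₙ (φ ↔ ψ). -/

import Mathlib

open FirstOrder FirstOrder.Language

universe u v

variable {L : FirstOrder.Language.{u, v}}

/-- A formula is *universal* if it has the form `∀ ȳ, χ` with `χ` quantifier-free. -/
def IsUniversalFormula {α : Type*} (φ : L.Formula α) : Prop :=
  ∃ (n : ℕ) (χ : L.BoundedFormula α n), χ.IsQF ∧ φ = χ.alls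

/-- A formula is *existential* if it has the form `∃ ȳ, χ` with `χ` quantifier-free. -/
def IsExistentialFormula {α : Type*} (φ : L.Formula α) : Prop :=
  ∃ (n : ℕ) (χ : L.BoundedFormula α n), χ.IsQF ∧ φ = χ.exs

/-- A theory is *model complete* if every embedding between models of it is elementary. -/
def IsModelComplete (T : L.Theory) : Prop :=
  ∀ (M N : Type (max u v)) [L.Structure M] [L.Structure N] [Nonempty M] [Nonempty N],
    M ⊨ T → N ⊨ T → ∀ (f : M ↪[L] N) (n : ℕ) (φ : L.Formula (Fin n)) (x : Fin n → M),
      φ.Realize (f ∘ x) ↔ φ.Realize x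

/-- `M` is *existentially closed in `N` via* the embedding `f` if every existential formula
with parameters from `M` that holds in `N` (of the images) already holds in `M`. -/
def IsECVia {M N : Type (max u v)} [L.Structure M] [L.Structure N] (f : M ↪[L] N) : Prop :=
  ∀ (k : ℕ) (φ : L.Formula (Fin k)), IsExistentialFormula φ →
    ∀ x : Fin k → M, φ.Realize (f ∘ x) → φ.Realize x

/-- `M` is *existentially closed for* the theory `T` if `M ⊨ T` and `M` is existentially
closed in every model of `T` via every embedding. -/
def IsECFor (T : L.Theory) (M : Type (max u v)) [L.Structure M] [Nonempty M] : Prop :=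
  M ⊨ T ∧ ∀ (N : Type (max u v)) [L.Structure N] [Nonempty N], N ⊨ T →
    ∀ f : M ↪[L] N, IsECVia f

/-- `T_∀` : the set of universal sentences that are logical consequences of `T`. -/
def universalPart (T : L.Theory) : L.Theory :=
  {φ : L.Sentence | IsUniversalFormula φ ∧ T ⊨ᵇ φ}

/-- `Tstar` is a *model companion* of `T`: `Tstar` is model complete, every model of `T`
embeds into a model of `Tstar`, and every model of `Tstar` embeds into a model of `T`. -/
def IsModelCompanion (T Tstar : L.Theory) : Prop :=
  IsModelComplete Tstar ∧
  (∀ (M : Type (max u v)) [L.Structure M] [Nonempty M], M ⊨ T →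
     ∃ (N : Type (max u v)) (_ : L.Structure N) (_ : Nonempty N),
       N ⊨ Tstar ∧ Nonempty (M ↪[L] N)) ∧
  (∀ (M : Type (max u v)) [L.Structure M] [Nonempty M], M ⊨ Tstar →
     ∃ (N : Type (max u v)) (_ : L.Structure N) (_ : Nonempty N),
       N ⊨ T ∧ Nonempty (M ↪[L] N))

/-!
Universal formulas are reflected by embeddings. So if `φ` and `¬φ` are both `T`-equivalent to
universal formulas, an embedding between models of `T` both reflects and preserves `φ`.

Conversely, model completeness makes every formula reflected by embeddings between models of `T`,
and the Łoś–Tarski argument applies. Suppose a model `K` of `T` satisfies at `x` every universal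
consequence of `φ`. If `T ∪ diag K ∪ {φ(x)}` were inconsistent, compactness would give a
quantifier-free `θ(x, k̄)` true in `K` with `T ⊨ φ(x) → ¬θ(x, k̄)`; then `∀ ȳ, ¬θ(x, ȳ)` would be a
universal consequence of `φ` that fails in `K`. So `K` embeds into a model of `T` satisfying
`φ(x)`, and hence `K ⊨ φ(x)`. A second use of compactness shows that `φ` follows, modulo `T`, from
finitely many of its universal consequences, whose conjunction is again universal.
-/

universe w

namespace FirstOrder.Language.BoundedFormula

variable {α β : Type*} {n : ℕ}

theorem IsQF.toFormula {φ : L.BoundedFormula α n} (h : φ.IsQF) : φ.toFormula.IsQF := by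
  induction h with
  | falsum => exact isQF_bot
  | of_isAtomic h =>
    cases h with
    | equal => exact (IsAtomic.equal _ _).isQF
    | rel => exact (IsAtomic.rel _ _).isQF
  | imp _ _ ih₁ ih₂ => exact ih₁.imp ih₂

theorem IsQF.restrictFreeVar [DecidableEq α] {φ : L.BoundedFormula α n} (h : φ.IsQF)
    (f : φ.freeVarFinset → β) : (φ.restrictFreeVar f).IsQF := by
  induction h with
  | falsum => exact isQF_bot
  | of_isAtomic h =>
    cases h with
    | equal => exact (IsAtomic.equal _ _).isQF
    | rel => exact (IsAtomic.rel _ _).isQF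
  | imp _ _ ih₁ ih₂ => exact (ih₁ _).imp (ih₂ _)

theorem isQF_iInf [Finite β] {f : β → L.BoundedFormula α n} (h : ∀ b, (f b).IsQF) :
    (iInf f).IsQF := by
  let := Fintype.ofFinite β
  suffices ∀ l : List (L.BoundedFormula α n), (∀ φ ∈ l, φ.IsQF) → (l.foldr (· ⊓ ·) ⊤).IsQF from
    this _ (by simpa using h)
  intro l hl
  induction l with
  | nil => exact IsQF.top
  | cons φ l ih => exact (hl φ (by simp)).inf (ih fun ψ hψ => hl ψ (by simp [hψ]))

theorem IsQF.exists_finset_realize_iff {θ : L.Formula (α ⊕ β)} (hθ : θ.IsQF) :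
    ∃ (s : Finset β) (θ' : L.Formula (α ⊕ s)), θ'.IsQF ∧
      ∀ {M : Type*} [L.Structure M] (v : α → M) (w : β → M),
        θ'.Realize (Sum.elim v (w ∘ (↑))) ↔ θ.Realize (Sum.elim v w) := by
  classical
  let f : θ.freeVarFinset → α ⊕ θ.freeVarFinset.toRight
    | ⟨.inl a, _⟩ => .inl a
    | ⟨.inr b, h⟩ => .inr ⟨b, Finset.mem_toRight.2 h⟩
  refine ⟨_, θ.restrictFreeVar f, hθ.restrictFreeVar f, fun v w => ?_⟩
  exact realize_restrictFreeVar _ (by rintro ⟨a | b, h⟩ <;> rfl)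

theorem IsUniversal.alls {φ : L.BoundedFormula α n} (h : φ.IsUniversal) : φ.alls.IsUniversal := by
  induction n with
  | zero => exact h
  | succ n ih => exact ih h.all

end FirstOrder.Language.BoundedFormula

open BoundedFormula

section Universal

variable {α : Type*}

theorem isUniversalFormula_iAlls {β : Type*} [Finite β] {θ : L.Formula (α ⊕ β)}
    (hθ : θ.IsQF) : IsUniversalFormula (θ.iAlls β) :=
  ⟨_, _, hθ.relabel _, rfl⟩

theorem IsUniversalFormula.isUniversal {ψ : L.Formula α} (h : IsUniversalFormula ψ) :
    ψ.IsUniversal := by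
  obtain ⟨k, χ, hχ, rfl⟩ := h
  exact hχ.isUniversal.alls

theorem IsUniversalFormula.realize_of_embedding {ψ : L.Formula α} (h : IsUniversalFormula ψ)
    {M N : Type*} [L.Structure M] [L.Structure N] (f : M ↪[L] N) {x : α → M}
    (hx : ψ.Realize (f ∘ x)) : ψ.Realize x :=
  h.isUniversal.realize_embedding f (xs := default) (by rwa [Unique.eq_default (f ∘ default)])

theorem IsUniversalFormula.exists_realize_iff_and {ψ₁ ψ₂ : L.Formula α}
    (h₁ : IsUniversalFormula ψ₁) (h₂ : IsUniversalFormula ψ₂) :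
    ∃ ψ : L.Formula α, IsUniversalFormula ψ ∧
      ∀ (M : Type*) [L.Structure M] [Nonempty M] (v : α → M),
        ψ.Realize v ↔ ψ₁.Realize v ∧ ψ₂.Realize v := by
  obtain ⟨k₁, χ₁, hχ₁, rfl⟩ := h₁
  obtain ⟨k₂, χ₂, hχ₂, rfl⟩ := h₂
  refine ⟨Formula.iAlls (Fin k₁ ⊕ Fin k₂) (χ₁.toFormula.relabel (Sum.map id Sum.inl) ⊓
      χ₂.toFormula.relabel (Sum.map id Sum.inr)),
    isUniversalFormula_iAlls ((hχ₁.toFormula.relabel _).inf (hχ₂.toFormula.relabel _)),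
    fun M _ _ v => ?_⟩
  simp only [Formula.realize_iAlls, Formula.realize_inf, Formula.realize_relabel,
    realize_toFormula, realize_alls, Function.comp_def, Sum.elim_inl, Sum.map_inl, Sum.map_inr,
    Sum.elim_inr, id]
  exact ⟨fun h => ⟨fun xs => (h (Sum.elim xs fun _ => Classical.arbitrary M)).1,
    fun ys => (h (Sum.elim (fun _ => Classical.arbitrary M) ys)).2⟩, fun h i => ⟨h.1 _, h.2 _⟩⟩

theorem exists_isUniversalFormula_realize_iff_forall_mem (s : Finset (L.Formula α))
    (hs : ∀ ψ ∈ s, IsUniversalFormula ψ) :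
    ∃ ψ : L.Formula α, IsUniversalFormula ψ ∧
      ∀ (M : Type*) [L.Structure M] [Nonempty M] (v : α → M),
        ψ.Realize v ↔ ∀ χ ∈ s, χ.Realize v := by
  classical
  induction s using Finset.induction_on with
  | empty => exact ⟨⊤, ⟨0, ⊤, IsQF.top, rfl⟩, by simp⟩
  | insert χ s _ ih =>
    obtain ⟨ψ, hψ, hψs⟩ := ih fun ψ hψ => hs ψ (Finset.mem_insert_of_mem hψ)
    obtain ⟨ψ', hψ', hψ'χ⟩ := (hs χ (Finset.mem_insert_self χ s)).exists_realize_iff_and hψ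
    exact ⟨ψ', hψ', fun M _ _ v => by rw [hψ'χ M v, hψs M v, Finset.forall_mem_insert]⟩

end Universal

namespace FirstOrder.Language.Theory

theorem exists_finset_forall_realize_imp {T : L.Theory} {α : Type w} {Γ : Set (L.Formula α)}
    {φ : L.Formula α}
    (h : ∀ (M : T.ModelType.{u, v, max u v w}) (x : α → M), (∀ ψ ∈ Γ, ψ.Realize x) →
      φ.Realize x) :
    ∃ Γ₀ : Finset (L.Formula α), ↑Γ₀ ⊆ Γ ∧
      ∀ (M : T.ModelType.{u, v, max u v w}) (x : α → M), (∀ ψ ∈ Γ₀, ψ.Realize x) →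
        φ.Realize x := by
  classical
  let T' := (L.lhomWithConstants α).onTheory T ∪ Formula.equivSentence '' Γ
  have hT' : T' ⊨ᵇ Formula.equivSentence φ := by
    refine models_sentence_iff.2 fun M => ?_
    let := (L.lhomWithConstants α).reduct M
    have : M ⊨ T := (LHom.onTheory_model _ _).1 (M.is_model.mono Set.subset_union_left)
    rw [Formula.realize_equivSentence]
    refine h (ModelType.of T M) _ fun ψ hψ => ?_
    have := realize_sentence_of_mem (M := M) T' (Or.inr ⟨ψ, hψ, rfl⟩)
    rwa [Formula.realize_equivSentence] at this
  obtain ⟨T₀, hT₀, hT₀φ⟩ := models_iff_finset_models.1 hT'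
  refine ⟨(T₀.preimage Formula.equivSentence Formula.equivSentence.injective.injOn).filter (· ∈ Γ),
    fun ψ hψ => (Finset.mem_filter.1 hψ).2, fun M x hx => ?_⟩
  let : (constantsOn α).Structure M := constantsOn.structure x
  have : M ⊨ (L.lhomWithConstants α).onTheory T := (LHom.onTheory_model _ _).2 M.is_model
  have : M ⊨ (T₀ : L[[α]].Theory) := by
    refine model_iff _ |>.2 fun σ hσ => ?_
    obtain hσT | ⟨ψ, hψ, rfl⟩ := hT₀ hσ
    · exact realize_sentence_of_mem _ hσT
    · exact (Formula.realize_equivSentence _ _).2 (hx ψ (by simpa [hψ] using hσ))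
  exact (Formula.realize_equivSentence _ _).1 (hT₀φ.realize_sentence M)

end FirstOrder.Language.Theory

theorem exists_embedding_of_forall_isQF_realize {M N : Type*} [L.Structure M] [L.Structure N]
    {w : M → N} (h : ∀ θ : L.Formula M, θ.IsQF → θ.Realize id → θ.Realize w) :
    ∃ f : M ↪[L] N, ⇑f = w := by
  have key (θ : L.Formula M) (hθ : θ.IsQF) : θ.Realize w ↔ θ.Realize id :=
    ⟨fun hw => by_contra fun hn => h θ.not hθ.not hn hw, h θ hθ⟩
  refine ⟨⟨⟨w, fun a b hab => ?_⟩, fun f xs => ?_, fun r xs => ?_⟩, rfl⟩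
  · simpa using (key ((Term.var a).equal (Term.var b)) (IsAtomic.equal _ _).isQF).1 hab
  · exact ((key ((Term.func f (Term.var ∘ xs)).equal (Term.var (Structure.funMap f xs)))
      (IsAtomic.equal _ _).isQF).2 (by simp)).symm
  · exact key (r.formula (Term.var ∘ xs)) (IsAtomic.rel _ _).isQF

def IsPreservedUnderSubmodels {α : Type} (T : L.Theory) (φ : L.Formula α) : Prop :=
  ∀ (M N : Type (max u v)) [L.Structure M] [L.Structure N] [Nonempty M] [Nonempty N],
    M ⊨ T → N ⊨ T → ∀ (f : M ↪[L] N) (x : α → M), φ.Realize (f ∘ x) → φ.Realize x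

theorem IsPreservedUnderSubmodels.realize_of_forall_isUniversalFormula {T : L.Theory} {α : Type} {φ : L.Formula α}
    (hφ : IsPreservedUnderSubmodels T φ)
    {K : Type (max u v)} [L.Structure K] [Nonempty K] (hK : K ⊨ T) (x : α → K)
    (hx : ∀ ψ : L.Formula α, IsUniversalFormula ψ → T ⊨ᵇ φ.imp ψ → ψ.Realize x) :
    φ.Realize x := by
  classical
  -- `Sum.inl a` names `x a` apart from `Sum.inr (x a)`, so `Δ` never has to be pulled back along
  -- a possibly non-injective `x`.
  let Δ : Set (L.Formula (α ⊕ K)) := {θ | θ.IsQF ∧ θ.Realize (Sum.elim x id)}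
  by_cases hN : ∃ (N : T.ModelType.{u, v, max u v}) (w : α ⊕ K → N),
      (∀ θ ∈ Δ, θ.Realize w) ∧ φ.Realize (w ∘ Sum.inl)
  · obtain ⟨N, w, hwΔ, hwφ⟩ := hN
    obtain ⟨f, hf⟩ := exists_embedding_of_forall_isQF_realize (w := w ∘ Sum.inr)
      fun θ hθ hθK => by simpa using hwΔ (θ.relabel Sum.inr) ⟨hθ.relabel _, by simpa using hθK⟩
    have hwx : w ∘ Sum.inl = f ∘ x := funext fun a => by
      simpa [hf] using hwΔ ((Term.var (Sum.inl a)).equal (Term.var (Sum.inr (x a))))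
        ⟨(IsAtomic.equal _ _).isQF, by simp⟩
    exact hφ K N hK N.is_model f x (hwx ▸ hwφ)
  obtain ⟨Δ₀, hΔ₀, hΔ₀φ⟩ := Theory.exists_finset_forall_realize_imp (Γ := Δ)
    (φ := (φ.relabel Sum.inl).not) fun N w hw hφw => hN ⟨N, w, hw, Formula.realize_relabel.1 hφw⟩
  let θ := Formula.iInf fun θ : Δ₀ => (θ : L.Formula (α ⊕ K))
  have hθ : θ.IsQF := isQF_iInf fun θ => (hΔ₀ θ.2).1
  obtain ⟨s, θ', hθ', hθ'θ⟩ := hθ.exists_finset_realize_iff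
  have hφψ : T ⊨ᵇ φ.imp (θ'.not.iAlls s) := Theory.models_formula_iff.2 fun M v hφv => by
    refine Formula.realize_iAlls.2 fun i hθ'i => ?_
    let w : K → M := fun b => if h : b ∈ s then i ⟨b, h⟩ else Classical.arbitrary M
    have hw : w ∘ Subtype.val = i := funext fun b => dif_pos b.2
    have hθw : θ.Realize (Sum.elim v w) := (hθ'θ v w).1 (by rwa [hw])
    exact hΔ₀φ M (Sum.elim v w) (by simpa [θ] using hθw) (Formula.realize_relabel.2 hφv)
  have hψx := Formula.realize_iAlls.1 (hx _ (isUniversalFormula_iAlls hθ'.not) hφψ) Subtype.val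
  exact (hψx ((hθ'θ x id).2 (by simpa [θ] using fun θ hθ => (hΔ₀ hθ).2))).elim

theorem IsPreservedUnderSubmodels.exists_isUniversalFormula_models_iff {T : L.Theory} {α : Type} {φ : L.Formula α}
    (hφ : IsPreservedUnderSubmodels T φ) :
    ∃ ψ : L.Formula α, IsUniversalFormula ψ ∧ T ⊨ᵇ φ.iff ψ := by
  obtain ⟨U₀, hU₀, hU₀φ⟩ := Theory.exists_finset_forall_realize_imp
    (Γ := {ψ | IsUniversalFormula ψ ∧ T ⊨ᵇ φ.imp ψ}) (φ := φ) fun K x hx =>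
      hφ.realize_of_forall_isUniversalFormula K.is_model x fun ψ hψ hφψ => hx ψ ⟨hψ, hφψ⟩
  obtain ⟨ψ, hψ, hψU₀⟩ := exists_isUniversalFormula_realize_iff_forall_mem U₀ fun χ hχ => (hU₀ hχ).1
  refine ⟨ψ, hψ, Theory.models_formula_iff.2 fun M x => ?_⟩
  rw [Formula.realize_iff, hψU₀ M x]
  exact ⟨fun hφx χ hχ => (hU₀ hχ).2.realize_formula M hφx, hU₀φ M x⟩

/-- Robinson's test, second equivalence: a theory is model complete iff every formula is
equivalent, modulo the theory, to a universal formula. -/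
theorem isModelComplete_iff_forall_equiv_universal (T : L.Theory) :
    IsModelComplete T ↔
      ∀ (n : ℕ) (φ : L.Formula (Fin n)), ∃ ψ : L.Formula (Fin n),
        IsUniversalFormula ψ ∧ T ⊨ᵇ φ.iff ψ := by
  refine ⟨fun hT n φ => IsPreservedUnderSubmodels.exists_isUniversalFormula_models_iff
    fun M N _ _ _ _ hM hN f x => (hT M N hM hN f n φ x).1, fun h M N _ _ _ _ hM hN f n φ x => ?_⟩
  have reflect (χ : L.Formula (Fin n)) (hχ : χ.Realize (f ∘ x)) : χ.Realize x := by
    obtain ⟨ψ, hψ, hχψ⟩ := h n χ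
    exact (Formula.realize_iff.1 (hχψ.realize_formula M)).2 <| hψ.realize_of_embedding f <|
      (Formula.realize_iff.1 (hχψ.realize_formula N)).1 hχ
  exact ⟨reflect φ, fun hφ => by_contra fun hn => reflect φ.not hn hφ⟩
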